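/- arXiv:2102.06849 — 3 statements merged into one kernel-verified Lean document; each statement's English description precedes it below -/
import Mathlib

section
/- For the temperature-scaling transformation φ_i(z) = z_i^α / ∑_j z_j^α with real α > 1, for every z in the probability simplex and every j ∈ [m], max_i φ_i(z) − φ_j(z) ≥ max_i z_i − z_j. -/
/-!
Let `M = max_i z_i`. Since `z_k^α ≤ M^(α-1) z_k` and `∑ z_k = 1`, the normaliser
`S = ∑ z_k^α` is at most `M^(α-1)`; as `z_i - z_j ≥ 0` for the maximal index `i`, this gives
`(z_i - z_j) S ≤ M^α - M^(α-1) z_j ≤ z_i^α - z_j^α`, i.e. `z_i - z_j ≤ φ_i - φ_j`.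
-/

open Finset

namespace Real

variable {a b x M S α : ℝ}

lemma rpow_le_rpow_sub_one_mul (hx : 0 ≤ x) (hxM : x ≤ M) (hα : 1 ≤ α) :
    x ^ α ≤ M ^ (α - 1) * x := by
  calc x ^ α = x ^ (α - 1) * x := by
        rw [← rpow_add_one' hx (by linarith), sub_add_cancel]
    _ ≤ M ^ (α - 1) * x := by gcongr

lemma sum_rpow_le_rpow_sub_one_mul_sum {ι : Type*} {s : Finset ι} {z : ι → ℝ}
    (hz : ∀ k ∈ s, 0 ≤ z k) (hzM : ∀ k ∈ s, z k ≤ M) (hα : 1 ≤ α) :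
    ∑ k ∈ s, z k ^ α ≤ M ^ (α - 1) * ∑ k ∈ s, z k := by
  rw [mul_sum]
  exact sum_le_sum fun k hk => rpow_le_rpow_sub_one_mul (hz k hk) (hzM k hk) hα

lemma sum_rpow_pos {ι : Type*} {s : Finset ι} {z : ι → ℝ}
    (hz : ∀ k ∈ s, 0 ≤ z k) (hsum : 0 < ∑ k ∈ s, z k) :
    0 < ∑ k ∈ s, z k ^ α := by
  obtain ⟨k, hk, hzk⟩ := (sum_pos_iff_of_nonneg hz).1 hsum
  exact (sum_pos_iff_of_nonneg fun l hl => rpow_nonneg (hz l hl) α).2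
    ⟨k, hk, rpow_pos_of_pos hzk α⟩

lemma sub_le_rpow_sub_rpow_div (hb : 0 ≤ b) (hba : b ≤ a) (hα : 1 ≤ α) (hS : 0 < S)
    (hSa : S ≤ a ^ (α - 1)) :
    a - b ≤ (a ^ α - b ^ α) / S := by
  rw [le_div_iff₀ hS]
  have hpow_a : a ^ α = a ^ (α - 1) * a := by
    rw [← rpow_add_one' (hb.trans hba) (by linarith), sub_add_cancel]
  calc (a - b) * S ≤ (a - b) * a ^ (α - 1) := by gcongr
    _ = a ^ α - a ^ (α - 1) * b := by rw [hpow_a]; ring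
    _ ≤ a ^ α - b ^ α := by gcongr; exact rpow_le_rpow_sub_one_mul hb hba hα

end Real

/-- Temperature scaling with `α > 1` satisfies the margin condition:
for every `j`, `max_i φ_i(z) − φ_j(z) ≥ max_i z_i − z_j`. -/
theorem stmt3 {m : ℕ} [NeZero m] (α : ℝ) (hα : 1 < α)
    (z : Fin m → ℝ) (hz : ∀ i, 0 ≤ z i) (hzsum : ∑ i, z i = 1)
    (φ : Fin m → ℝ) (hφ : ∀ i, φ i = z i ^ α / ∑ j, z j ^ α) :
    ∀ j, Finset.univ.sup' Finset.univ_nonempty z - z j ≤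
      Finset.univ.sup' Finset.univ_nonempty φ - φ j := by
  intro j
  obtain ⟨i, -, hi⟩ := exists_mem_eq_sup' univ_nonempty z
  have hmax : ∀ k, z k ≤ z i := fun k => hi ▸ le_sup' z (mem_univ k)
  have hS_pos : 0 < ∑ k, z k ^ α :=
    Real.sum_rpow_pos (fun k _ => hz k) (by rw [hzsum]; exact one_pos)
  have hS_le : ∑ k, z k ^ α ≤ z i ^ (α - 1) := by
    simpa only [hzsum, mul_one] using Real.sum_rpow_le_rpow_sub_one_mul_sum (s := univ)
      (fun k _ => hz k) (fun k _ => hmax k) hα.le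
  have hmargin : z i - z j ≤ φ i - φ j := by
    rw [hφ i, hφ j, div_sub_div_same]
    exact Real.sub_le_rpow_sub_rpow_div (hz j) (hmax j) hα.le hS_pos hS_le
  rw [hi]
  linarith [le_sup' φ (mem_univ i)]
end

section
/- Suppose p^φ: X → Δ^m satisfies, for all x: (i) argmax_y p^φ_y(x) = argmax_y p*_y(x), and (ii) max_i p^φ_i(x) − p^φ_j(x) ≥ max_i p*_i(x) − p*_j(x) for all j ∈ [m]. Then for every classifier ĥ: X → [m], the excess risk R(ĥ) − R(h*) with respect to p* is at most R^φ(ĥ) − R^φ(h*), where R^φ denotes the 0-1 risk computed with weights p^φ in place of p*. -/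
/-!
Write `ℓ_q(k) = ∑ i, q i * 1(k ≠ i) = ∑ q - q k` for the zero-one loss of the label `k` under the
weights `q`. Since `h*` picks an argmax of `p` and, by the argmax condition, also of `pφ`, the
pointwise excess loss of `h` is `ℓ_p(h x) - ℓ_p(h* x) = max p - p (h x)`, and likewise for `pφ`.
The margin condition is therefore exactly the pointwise inequality between the two excess losses,
which integrates to the claim; the losses are integrable since they take values in `[0, 1]`.
-/

open MeasureTheory

section

variable {ι : Type*} [Fintype ι]

lemma sup'_univ_eq_of_forall_le [Nonempty ι] {q : ι → ℝ} {k : ι} (hk : ∀ j, q j ≤ q k) :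
    Finset.univ.sup' Finset.univ_nonempty q = q k :=
  le_antisymm (Finset.sup'_le _ _ fun j _ => hk j) (Finset.le_sup' _ (Finset.mem_univ k))

variable [DecidableEq ι]

noncomputable def zeroOneLoss (q : ι → ℝ) (k : ι) : ℝ :=
  ∑ i, q i * if k = i then 0 else 1

lemma zeroOneLoss_eq_sum_sub (q : ι → ℝ) (k : ι) : zeroOneLoss q k = ∑ i, q i - q k := by
  have hsplit : ∀ i, q i * (if k = i then (0 : ℝ) else 1) = q i - if k = i then q i else 0 := by
    intro i
    split_ifs <;> simp
  simp only [zeroOneLoss, hsplit, Finset.sum_sub_distrib, Finset.sum_ite_eq, Finset.mem_univ,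
    if_true]

lemma zeroOneLoss_sub_zeroOneLoss (q : ι → ℝ) (j k : ι) :
    zeroOneLoss q j - zeroOneLoss q k = q k - q j := by
  rw [zeroOneLoss_eq_sum_sub, zeroOneLoss_eq_sum_sub]
  ring

lemma abs_zeroOneLoss_le_one {q : ι → ℝ} (hq0 : ∀ i, 0 ≤ q i) (hq1 : ∑ i, q i = 1) (k : ι) :
    |zeroOneLoss q k| ≤ 1 := by
  have hk : q k ≤ 1 := hq1 ▸ Finset.single_le_sum (fun i _ => hq0 i) (Finset.mem_univ k)
  rw [zeroOneLoss_eq_sum_sub, hq1]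
  exact abs_le.mpr ⟨by linarith [hq0 k], by linarith [hq0 k]⟩

lemma measurable_zeroOneLoss {X : Type*} [MeasurableSpace X] [MeasurableSpace ι]
    [MeasurableSingletonClass ι] {q : X → ι → ℝ} (hq : ∀ i, Measurable fun x => q x i)
    {g : X → ι} (hg : Measurable g) : Measurable fun x => zeroOneLoss (q x) (g x) :=
  Finset.measurable_sum _ fun i _ =>
    (hq i).mul (Measurable.ite (hg (measurableSet_singleton i)) measurable_const measurable_const)

lemma integrable_zeroOneLoss {X : Type*} [MeasurableSpace X] [MeasurableSpace ι]
    [MeasurableSingletonClass ι] (μ : Measure X) [IsFiniteMeasure μ] {q : X → ι → ℝ}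
    (hq : ∀ i, Measurable fun x => q x i) (hq0 : ∀ x i, 0 ≤ q x i) (hq1 : ∀ x, ∑ i, q x i = 1)
    {g : X → ι} (hg : Measurable g) : Integrable (fun x => zeroOneLoss (q x) (g x)) μ :=
  .of_bound (measurable_zeroOneLoss hq hg).aestronglyMeasurable 1
    (ae_of_all _ fun x => abs_zeroOneLoss_le_one (hq0 x) (hq1 x) (g x))

end

/-- If `pφ` preserves the argmax set of `p` and satisfies the margin condition,
then the excess risk of any classifier w.r.t. `p` is bounded by its excess risk
w.r.t. `pφ`. -/
theorem stmt6 {X : Type*} [MeasurableSpace X] (μ : Measure X) [IsProbabilityMeasure μ]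
    {m : ℕ} [NeZero m] (p pφ : X → Fin m → ℝ)
    (hpmeas : ∀ i, Measurable fun x => p x i)
    (hpφmeas : ∀ i, Measurable fun x => pφ x i)
    (hp0 : ∀ x i, 0 ≤ p x i) (hp1 : ∀ x, ∑ i, p x i = 1)
    (hpφ0 : ∀ x i, 0 ≤ pφ x i) (hpφ1 : ∀ x, ∑ i, pφ x i = 1)
    (hargmax : ∀ x, {i | ∀ j, p x j ≤ p x i} = {i | ∀ j, pφ x j ≤ pφ x i})
    (hmargin : ∀ x j, Finset.univ.sup' Finset.univ_nonempty (p x) - p x j ≤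
      Finset.univ.sup' Finset.univ_nonempty (pφ x) - pφ x j)
    (hstar : X → Fin m) (hstarmeas : Measurable hstar)
    (hstarmax : ∀ x j, p x j ≤ p x (hstar x))
    (h : X → Fin m) (hmeas : Measurable h) :
    (∫ x, ∑ i, p x i * (if h x = i then 0 else 1) ∂μ) -
      (∫ x, ∑ i, p x i * (if hstar x = i then 0 else 1) ∂μ) ≤
    (∫ x, ∑ i, pφ x i * (if h x = i then 0 else 1) ∂μ) -
      (∫ x, ∑ i, pφ x i * (if hstar x = i then 0 else 1) ∂μ) := by
  have hstarmaxφ : ∀ x j, pφ x j ≤ pφ x (hstar x) := fun x =>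
    (Set.ext_iff.mp (hargmax x) (hstar x)).mp (hstarmax x)
  have hexcess : ∀ x, zeroOneLoss (p x) (h x) - zeroOneLoss (p x) (hstar x) ≤
      zeroOneLoss (pφ x) (h x) - zeroOneLoss (pφ x) (hstar x) := by
    intro x
    have hmargin_x := hmargin x (h x)
    rw [sup'_univ_eq_of_forall_le (hstarmax x), sup'_univ_eq_of_forall_le (hstarmaxφ x)]
      at hmargin_x
    rwa [zeroOneLoss_sub_zeroOneLoss, zeroOneLoss_sub_zeroOneLoss]
  have hp_h := integrable_zeroOneLoss μ hpmeas hp0 hp1 hmeas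
  have hp_star := integrable_zeroOneLoss μ hpmeas hp0 hp1 hstarmeas
  have hpφ_h := integrable_zeroOneLoss μ hpφmeas hpφ0 hpφ1 hmeas
  have hpφ_star := integrable_zeroOneLoss μ hpφmeas hpφ0 hpφ1 hstarmeas
  change (∫ x, zeroOneLoss (p x) (h x) ∂μ) - (∫ x, zeroOneLoss (p x) (hstar x) ∂μ) ≤
    (∫ x, zeroOneLoss (pφ x) (h x) ∂μ) - (∫ x, zeroOneLoss (pφ x) (hstar x) ∂μ)
  rw [← integral_sub hp_h hp_star, ← integral_sub hpφ_h hpφ_star]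
  exact integral_mono (hp_h.sub hp_star) (hpφ_h.sub hpφ_star) hexcess
end

section
/- Combining the margin-preserving conditions and the teacher approximation bound: if p^φ satisfies the argmax-preservation and margin conditions relative to p*, and p^t: X → Δ^m is arbitrary, then for any classifier ĥ, R(ĥ) − R(h*) ≤ R^t(ĥ) − R^t(h*) + E_x[‖p^t(x) − p^φ(x)‖_1]. -/
/-!
Pointwise, with `a = h*(x)` and `b = h(x)`, the excess loss under `p` is `p a - p b`. Since
`a` also maximises `pφ`, the margin condition gives `p a - p b ≤ pφ a - pφ b`, and replacing
`pφ` by `pt` at the two coordinates `a`, `b` costs at most `‖pt - pφ‖₁`. All integrands are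
bounded, so integrating the pointwise inequality gives the claim.
-/

open MeasureTheory

section Simplex

variable {ι : Type*} [Fintype ι]

lemma le_one_of_sum_eq_one {q : ι → ℝ} (hq0 : ∀ i, 0 ≤ q i) (hq1 : ∑ i, q i = 1)
    (i : ι) : q i ≤ 1 :=
  hq1 ▸ Finset.single_le_sum (fun j _ => hq0 j) (Finset.mem_univ i)

lemma sum_mul_ite_eq_one_sub [DecidableEq ι] {q : ι → ℝ} (hq1 : ∑ i, q i = 1) (a : ι) :
    ∑ i, q i * (if a = i then 0 else 1) = 1 - q a := by
  simp_rw [mul_ite, mul_zero, mul_one, ← hq1, Finset.sum_ite, Finset.filter_eq,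
    Finset.filter_ne, Finset.mem_univ, if_true, Finset.sum_singleton]
  rw [← Finset.sum_erase_add _ _ (Finset.mem_univ a), add_sub_cancel_right, zero_add]

lemma sum_abs_sub_le_two {q r : ι → ℝ} (hq0 : ∀ i, 0 ≤ q i) (hq1 : ∑ i, q i = 1)
    (hr0 : ∀ i, 0 ≤ r i) (hr1 : ∑ i, r i = 1) : ∑ i, |q i - r i| ≤ 2 :=
  calc ∑ i, |q i - r i| ≤ ∑ i, (q i + r i) :=
        Finset.sum_le_sum fun i _ => (abs_sub _ _).trans_eq <| by
          rw [abs_of_nonneg (hq0 i), abs_of_nonneg (hr0 i)]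
    _ = 2 := by rw [Finset.sum_add_distrib, hq1, hr1]; norm_num

lemma sub_le_sub_add_sum_abs_sub (q r : ι → ℝ) (a b : ι) :
    r a - r b ≤ q a - q b + ∑ i, |q i - r i| := by
  classical
  by_cases hab : a = b
  · subst hab
    simpa using Finset.sum_nonneg fun i _ => abs_nonneg (q i - r i)
  · have hpair : |q a - r a| + |q b - r b| ≤ ∑ i, |q i - r i| :=
      calc |q a - r a| + |q b - r b| = ∑ i ∈ {a, b}, |q i - r i| :=
            (Finset.sum_pair (f := fun i => |q i - r i|) hab).symm
        _ ≤ ∑ i, |q i - r i| := Finset.sum_le_sum_of_subset_of_nonneg (Finset.subset_univ _)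
          fun i _ _ => abs_nonneg _
    linarith [neg_abs_le (q a - r a), le_abs_self (q b - r b)]

lemma Finset.sup'_univ_eq_of_forall_le [Nonempty ι] {α : Type*} [SemilatticeSup α]
    {f : ι → α} {a : ι} (ha : ∀ j, f j ≤ f a) : Finset.univ.sup' Finset.univ_nonempty f = f a :=
  le_antisymm (Finset.sup'_le _ _ fun j _ => ha j)
    (Finset.le_sup' f (Finset.mem_univ a))

lemma sub_le_sub_of_margin [Nonempty ι] {p pφ : ι → ℝ}
    (hargmax : {i | ∀ j, p j ≤ p i} = {i | ∀ j, pφ j ≤ pφ i})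
    (hmargin : ∀ j, Finset.univ.sup' Finset.univ_nonempty p - p j ≤
      Finset.univ.sup' Finset.univ_nonempty pφ - pφ j)
    {a : ι} (ha : ∀ j, p j ≤ p a) (b : ι) :
    p a - p b ≤ pφ a - pφ b := by
  have haφ : a ∈ {i | ∀ j, pφ j ≤ pφ i} := hargmax ▸ ha
  simpa only [Finset.sup'_univ_eq_of_forall_le ha, Finset.sup'_univ_eq_of_forall_le haφ]
    using hmargin b

end Simplex

section Integrability

variable {X : Type*} [MeasurableSpace X] {μ : Measure X} [IsFiniteMeasure μ] {ι : Type*}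
  [Fintype ι] {q r : X → ι → ℝ}

lemma integrable_sum_mul_ite [MeasurableSpace ι] [MeasurableSingletonClass ι] [DecidableEq ι]
    (hqmeas : ∀ i, Measurable fun x => q x i) (hq0 : ∀ x i, 0 ≤ q x i)
    (hq1 : ∀ x, ∑ i, q x i = 1) {g : X → ι} (hg : Measurable g) :
    Integrable (fun x => ∑ i, q x i * (if g x = i then 0 else 1)) μ := by
  have hmeas : Measurable fun x => ∑ i, q x i * (if g x = i then 0 else 1) :=
    Finset.measurable_sum _ fun i _ => (hqmeas i).mul
      (Measurable.ite (hg (measurableSet_singleton i)) measurable_const measurable_const)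
  refine Integrable.of_bound hmeas.aestronglyMeasurable 1 (.of_forall fun x => ?_)
  rw [sum_mul_ite_eq_one_sub (hq1 x), Real.norm_eq_abs, abs_le]
  constructor <;> linarith [hq0 x (g x), le_one_of_sum_eq_one (hq0 x) (hq1 x) (g x)]

lemma integrable_sum_abs_sub (hqmeas : ∀ i, Measurable fun x => q x i)
    (hrmeas : ∀ i, Measurable fun x => r x i) (hq0 : ∀ x i, 0 ≤ q x i)
    (hq1 : ∀ x, ∑ i, q x i = 1) (hr0 : ∀ x i, 0 ≤ r x i) (hr1 : ∀ x, ∑ i, r x i = 1) :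
    Integrable (fun x => ∑ i, |q x i - r x i|) μ := by
  have hmeas : Measurable fun x => ∑ i, |q x i - r x i| :=
    Finset.measurable_sum _ fun i _ => ((hqmeas i).sub (hrmeas i)).abs
  refine Integrable.of_bound hmeas.aestronglyMeasurable 2 (.of_forall fun x => ?_)
  rw [Real.norm_of_nonneg (Finset.sum_nonneg fun i _ => abs_nonneg _)]
  exact sum_abs_sub_le_two (hq0 x) (hq1 x) (hr0 x) (hr1 x)

end Integrability

/-- Combining margin preservation and teacher approximation: if `pφ` preserves the
argmax set and margins of `p`, and `pt` is arbitrary, then for any classifier `h`,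
`R(h) − R(h*) ≤ R^t(h) − R^t(h*) + E_x[‖pt(x) − pφ(x)‖₁]`. -/
theorem stmt8 {X : Type*} [MeasurableSpace X] (μ : Measure X) [IsProbabilityMeasure μ]
    {m : ℕ} [NeZero m] (p pφ pt : X → Fin m → ℝ)
    (hpmeas : ∀ i, Measurable fun x => p x i)
    (hpφmeas : ∀ i, Measurable fun x => pφ x i)
    (hptmeas : ∀ i, Measurable fun x => pt x i)
    (hp0 : ∀ x i, 0 ≤ p x i) (hp1 : ∀ x, ∑ i, p x i = 1)
    (hpφ0 : ∀ x i, 0 ≤ pφ x i) (hpφ1 : ∀ x, ∑ i, pφ x i = 1)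
    (hpt0 : ∀ x i, 0 ≤ pt x i) (hpt1 : ∀ x, ∑ i, pt x i = 1)
    (hargmax : ∀ x, {i | ∀ j, p x j ≤ p x i} = {i | ∀ j, pφ x j ≤ pφ x i})
    (hmargin : ∀ x j, Finset.univ.sup' Finset.univ_nonempty (p x) - p x j ≤
      Finset.univ.sup' Finset.univ_nonempty (pφ x) - pφ x j)
    (hstar : X → Fin m) (hstarmeas : Measurable hstar)
    (hstarmax : ∀ x j, p x j ≤ p x (hstar x))
    (h : X → Fin m) (hmeas : Measurable h) :
    (∫ x, ∑ i, p x i * (if h x = i then 0 else 1) ∂μ) -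
      (∫ x, ∑ i, p x i * (if hstar x = i then 0 else 1) ∂μ) ≤
    ((∫ x, ∑ i, pt x i * (if h x = i then 0 else 1) ∂μ) -
      (∫ x, ∑ i, pt x i * (if hstar x = i then 0 else 1) ∂μ)) +
      ∫ x, ∑ i, |pt x i - pφ x i| ∂μ := by
  have I1 := integrable_sum_mul_ite (μ := μ) hpmeas hp0 hp1 hmeas
  have I2 := integrable_sum_mul_ite (μ := μ) hpmeas hp0 hp1 hstarmeas
  have I3 := integrable_sum_mul_ite (μ := μ) hptmeas hpt0 hpt1 hmeas
  have I4 := integrable_sum_mul_ite (μ := μ) hptmeas hpt0 hpt1 hstarmeas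
  have I5 := integrable_sum_abs_sub (μ := μ) hptmeas hpφmeas hpt0 hpt1 hpφ0 hpφ1
  rw [← integral_sub I1 I2, ← integral_sub I3 I4, ← integral_add (I3.sub' I4) I5]
  refine integral_mono (I1.sub' I2) ((I3.sub' I4).add I5) fun x => ?_
  simp only [sum_mul_ite_eq_one_sub (hp1 x), sum_mul_ite_eq_one_sub (hpt1 x)]
  linarith [sub_le_sub_of_margin (hargmax x) (hmargin x) (hstarmax x) (h x),
    sub_le_sub_add_sum_abs_sub (pt x) (pφ x) (hstar x) (h x)]
end
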